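/- arXiv:2101.00329 — 2 statements merged into one kernel-verified Lean document; each statement's English description precedes it below -/
import Mathlib

section
/- Let C be a smooth projective geometrically irreducible curve of genus g(C) ≥ 1 over a finite field k of order q ≡ 1 (mod ℓ). There is a unique automorphism A of ℚ_ℓ ⊗_{ℤ_ℓ} T_ℓ(C) such that Φ_{k,C} = 1 + ℓA, and multiplication by A^{-1} defines a homomorphism dℒ: Pic⁰(C)[ℓ] = (T_ℓ(C) ∩ A·T_ℓ(C))/ℓA·T_ℓ(C) → T_ℓ(C)/(ℓT_ℓ(C) + ℓA·T_ℓ(C)) = Pic⁰(C)/ℓ·Pic⁰(C) (the Legendre derivative of Frobenius). -/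
/-!
Tensoring with `ℚ_ℓ` kills the finite cokernel `T/(1 - Φ)T`, so `1 - Φ` is surjective, hence
bijective, on the finite-dimensional `ℚ_ℓ`-space `ℚ_ℓ ⊗ T`; so `A = (Φ - 1)/ℓ` is the unique automorphism with
`Φ = 1 + ℓA`. The homomorphism `dℒ` is `A⁻¹` restricted to `T ∩ A·T`, which lands in `T`
and sends `ℓA·T` onto `ℓT ⊆ ℓT + ℓA·T`.
-/

open scoped TensorProduct

namespace LinearMap

variable {R K M : Type*} [CommRing R] [Field K] [CharZero K] [Algebra R K]
  [AddCommGroup M] [Module R M]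

theorem baseChange_surjective_of_isAddTorsion {N : Type*} [AddCommGroup N] [Module R N]
    (f : M →ₗ[R] N) (hf : IsAddTorsion (N ⧸ range f)) :
    Function.Surjective (f.baseChange K) := by
  rw [← range_eq_top, eq_top_iff, ← Submodule.span_eq_top_of_span_eq_top R K _
    (TensorProduct.span_tmul_eq_top R K N), Submodule.span_le]
  rintro _ ⟨c, t, rfl⟩
  obtain ⟨n, hn, hnt⟩ := isOfFinAddOrder_iff_nsmul_eq_zero.mp (hf (Submodule.Quotient.mk t))
  obtain ⟨s, hs⟩ : n • t ∈ range f := by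
    rwa [← Submodule.Quotient.mk_smul, Submodule.Quotient.mk_eq_zero] at hnt
  refine ⟨(c / n) ⊗ₜ s, ?_⟩
  have hn0 : (n : K) ≠ 0 := Nat.cast_ne_zero.mpr hn.ne'
  rw [baseChange_tmul, hs, TensorProduct.tmul_smul, TensorProduct.smul_tmul', nsmul_eq_mul,
    mul_div_cancel₀ c hn0]

theorem baseChange_bijective_of_isAddTorsion [Module.Finite R M]
    (f : M →ₗ[R] M) (hf : IsAddTorsion (M ⧸ range f)) :
    Function.Bijective (f.baseChange K) :=
  have hsurj := baseChange_surjective_of_isAddTorsion f hf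
  ⟨injective_iff_surjective.mpr hsurj, hsurj⟩

end LinearMap

theorem AddEquiv.exists_symm_quotientMap {V : Type*} [AddCommGroup V] (e : V ≃+ V)
    (T N S : AddSubgroup V) (hNS : N ≤ S) :
    ∃ d : ↥(T ⊓ T.map e.toAddMonoidHom) ⧸
          (N.map e.toAddMonoidHom).addSubgroupOf (T ⊓ T.map e.toAddMonoidHom) →+
        ↥T ⧸ S.addSubgroupOf T,
      ∀ (x : V) (hx : x ∈ T ⊓ T.map e.toAddMonoidHom) (y : V) (hy : y ∈ T),
        e y = x → d (QuotientAddGroup.mk ⟨x, hx⟩) = QuotientAddGroup.mk ⟨y, hy⟩ := by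
  let d₀ : ↥(T ⊓ T.map e.toAddMonoidHom) →+ ↥T :=
    (e.addSubgroupMap T).symm.toAddMonoidHom.comp (AddSubgroup.inclusion inf_le_right)
  have hd₀ : ∀ x, (d₀ x : V) = e.symm x := fun x => rfl
  refine ⟨QuotientAddGroup.map _ _ d₀ ?_, fun x hx y hy hxy => ?_⟩
  · rintro x ⟨y, hy, hxy⟩
    have hyx : e.symm x = y := e.symm_apply_eq.mpr hxy.symm
    rw [AddSubgroup.mem_comap, AddSubgroup.mem_addSubgroupOf, hd₀, hyx]
    exact hNS hy
  · rw [QuotientAddGroup.map_mk]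
    exact congrArg _ (Subtype.ext (e.symm_apply_eq.mpr hxy.symm))

theorem stmt_13_general
    (ℓ : ℕ) [hℓ : Fact (Nat.Prime ℓ)]
    -- the ℓ-adic Tate module, free of rank 2g over ℤ_ℓ
    (T : Type) [AddCommGroup T] [Module ℤ_[ℓ] T]
    [Module.Finite ℤ_[ℓ] T]
    -- the arithmetic Frobenius automorphism Φ_{k,C} of T
    (Φ : T ≃ₗ[ℤ_[ℓ]] T)
    -- T/(1-Φ)T ≅ Pic⁰(C)[ℓ^∞] is finite (via the Artin map)
    (hfin : Finite
      (T ⧸ LinearMap.range ((LinearMap.id : T →ₗ[ℤ_[ℓ]] T) - Φ.toLinearMap))) :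
    ∃! A : (ℚ_[ℓ] ⊗[ℤ_[ℓ]] T) →ₗ[ℚ_[ℓ]] (ℚ_[ℓ] ⊗[ℤ_[ℓ]] T),
      -- A is an automorphism of ℚ_ℓ ⊗ T with Φ = 1 + ℓ A
      Function.Bijective A
        ∧
      LinearMap.baseChange ℚ_[ℓ] Φ.toLinearMap = LinearMap.id + (ℓ : ℚ_[ℓ]) • A
        ∧
      -- multiplication by A⁻¹ defines dℒ : (T ∩ A T)/ℓA T → T/(ℓT + ℓA T)
      (∀ ι : T →ₗ[ℤ_[ℓ]] (ℚ_[ℓ] ⊗[ℤ_[ℓ]] T),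
        (∀ t : T, ι t = (1 : ℚ_[ℓ]) ⊗ₜ[ℤ_[ℓ]] t) →
        -- the subgroups T, A·T, ℓA·T and ℓT + ℓA·T of ℚ_ℓ ⊗ T
        ∀ TT AT lAT S3 : AddSubgroup (ℚ_[ℓ] ⊗[ℤ_[ℓ]] T),
          TT = AddMonoidHom.range ι.toAddMonoidHom →
          AT = AddMonoidHom.range (A.toAddMonoidHom.comp ι.toAddMonoidHom) →
          lAT = AddMonoidHom.range (((ℓ : ℚ_[ℓ]) • A).toAddMonoidHom.comp
            ι.toAddMonoidHom) →
          S3 = AddMonoidHom.range ((ℓ • ι).toAddMonoidHom) ⊔ lAT →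
          ∃ dL : (↥(TT ⊓ AT) ⧸ (lAT.addSubgroupOf (TT ⊓ AT))) →+
              (↥TT ⧸ (S3.addSubgroupOf TT)),
            ∀ (x : ℚ_[ℓ] ⊗[ℤ_[ℓ]] T) (hx : x ∈ TT ⊓ AT)
              (y : ℚ_[ℓ] ⊗[ℤ_[ℓ]] T) (hy : y ∈ TT),
              A y = x →
              dL (QuotientAddGroup.mk ⟨x, hx⟩) = QuotientAddGroup.mk ⟨y, hy⟩) := by
  have hℓ0 : (ℓ : ℚ_[ℓ]) ≠ 0 := Nat.cast_ne_zero.mpr hℓ.out.ne_zero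
  have hF := LinearMap.baseChange_bijective_of_isAddTorsion (K := ℚ_[ℓ])
    (LinearMap.id - Φ.toLinearMap) (@isAddTorsion_of_finite _ _ hfin)
  set A : (ℚ_[ℓ] ⊗[ℤ_[ℓ]] T) →ₗ[ℚ_[ℓ]] (ℚ_[ℓ] ⊗[ℤ_[ℓ]] T) :=
    (-(ℓ : ℚ_[ℓ])⁻¹) • (LinearMap.id - Φ.toLinearMap).baseChange ℚ_[ℓ]
  have hA : Function.Bijective A :=
    (IsUnit.mk0 _ (neg_ne_zero.mpr (inv_ne_zero hℓ0))).smul_bijective.comp hF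
  have hΦA : Φ.toLinearMap.baseChange ℚ_[ℓ] = LinearMap.id + (ℓ : ℚ_[ℓ]) • A := by
    rw [smul_smul, mul_neg, mul_inv_cancel₀ hℓ0, neg_one_smul, LinearMap.baseChange_sub,
      LinearMap.baseChange_id, neg_sub, add_sub_cancel]
  refine ⟨A, ⟨hA, hΦA, ?_⟩, fun A' ⟨_, hΦA', _⟩ =>
    smul_right_injective _ hℓ0 (add_left_cancel (hΦA'.symm.trans hΦA))⟩
  intro ι _ TT AT lAT S3 hTT hAT hlAT hS3
  set e := (LinearEquiv.ofBijective A hA).toAddEquiv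
  have hAT' : AT = TT.map e.toAddMonoidHom := by
    rw [hAT, hTT, AddMonoidHom.range_comp]
    rfl
  have hlAT' : lAT = (ℓ • ι).toAddMonoidHom.range.map e.toAddMonoidHom := by
    rw [hlAT, ← AddMonoidHom.range_comp]
    congr 1
    ext t
    simp [e, Nat.cast_smul_eq_nsmul]
  subst hAT' hlAT'
  exact e.exists_symm_quotientMap TT _ S3 (hS3 ▸ le_sup_left)

theorem stmt_13
    (ℓ : ℕ) [hℓ : Fact (Nat.Prime ℓ)] (q : ℕ) (hqmod : q % ℓ = 1) (hq1 : 1 < q)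
    (g : ℕ) (hg : 1 ≤ g)
    -- the ℓ-adic Tate module, free of rank 2g over ℤ_ℓ
    (T : Type) [AddCommGroup T] [Module ℤ_[ℓ] T]
    [Module.Free ℤ_[ℓ] T] [Module.Finite ℤ_[ℓ] T]
    (hrank : Module.finrank ℤ_[ℓ] T = 2 * g)
    -- the arithmetic Frobenius automorphism Φ_{k,C} of T
    (Φ : T ≃ₗ[ℤ_[ℓ]] T)
    -- T/(1-Φ)T ≅ Pic⁰(C)[ℓ^∞] is finite (via the Artin map)
    (hfin : Finite
      (T ⧸ LinearMap.range ((LinearMap.id : T →ₗ[ℤ_[ℓ]] T) - Φ.toLinearMap))) :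
    ∃! A : (ℚ_[ℓ] ⊗[ℤ_[ℓ]] T) →ₗ[ℚ_[ℓ]] (ℚ_[ℓ] ⊗[ℤ_[ℓ]] T),
      -- A is an automorphism of ℚ_ℓ ⊗ T with Φ = 1 + ℓ A
      Function.Bijective A
        ∧
      LinearMap.baseChange ℚ_[ℓ] Φ.toLinearMap = LinearMap.id + (ℓ : ℚ_[ℓ]) • A
        ∧
      -- multiplication by A⁻¹ defines dℒ : (T ∩ A T)/ℓA T → T/(ℓT + ℓA T)
      (∀ ι : T →ₗ[ℤ_[ℓ]] (ℚ_[ℓ] ⊗[ℤ_[ℓ]] T),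
        (∀ t : T, ι t = (1 : ℚ_[ℓ]) ⊗ₜ[ℤ_[ℓ]] t) →
        -- the subgroups T, A·T, ℓA·T and ℓT + ℓA·T of ℚ_ℓ ⊗ T
        ∀ TT AT lAT S3 : AddSubgroup (ℚ_[ℓ] ⊗[ℤ_[ℓ]] T),
          TT = AddMonoidHom.range ι.toAddMonoidHom →
          AT = AddMonoidHom.range (A.toAddMonoidHom.comp ι.toAddMonoidHom) →
          lAT = AddMonoidHom.range (((ℓ : ℚ_[ℓ]) • A).toAddMonoidHom.comp
            ι.toAddMonoidHom) →
          S3 = AddMonoidHom.range ((ℓ • ι).toAddMonoidHom) ⊔ lAT →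
          ∃ dL : (↥(TT ⊓ AT) ⧸ (lAT.addSubgroupOf (TT ⊓ AT))) →+
              (↥TT ⧸ (S3.addSubgroupOf TT)),
            ∀ (x : ℚ_[ℓ] ⊗[ℤ_[ℓ]] T) (hx : x ∈ TT ⊓ AT)
              (y : ℚ_[ℓ] ⊗[ℤ_[ℓ]] T) (hy : y ∈ TT),
              A y = x →
              dL (QuotientAddGroup.mk ⟨x, hx⟩) = QuotientAddGroup.mk ⟨y, hy⟩) :=
  stmt_13_general ℓ (hℓ := hℓ) T Φ hfin
end

section
/- Let ζ be a primitive cube root of unity, F = ℚ(ζ), E the elliptic curve y² = x³ − 3 over F, and E' the elliptic curve ỹ² = 1 − 3w³ over F. For a finite extension N of F, let E_N = N ⊗_F E and E'_N = N ⊗_F E'. Then: (i) the 3-torsion subgroup of Pic⁰(E_N) has order 9 if and only if F(12^{1/3}) ⊆ N; (ii) the 3-torsion subgroup of Pic⁰(E'_N) has order 9 if and only if F((4/3)^{1/3}) ⊆ N. -/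
/-!
Both curves are Mordell curves `y² = x³ + b` (`b = -3`, resp. `b = 9` for the model of
`E'`). In characteristic `≠ 2, 3` the nonzero `3`-torsion points of such a curve are the
affine points with `x (x³ + 4b) = 0`: the doubling formula gives `x(2P) = x(P)` exactly there.
When `b` and `-3 = (2ζ + 1)²` are squares, these are `(0, ±√b)` and `(x, ±√(-3b))` with
`x³ = -4b`; since `ζ` is present, `-4b` has three cube roots or none, so the `3`-torsion has
order `9` or `3` according as `-4b` is a cube. Finally `-4 · (-3) = 12` and
`-4 · 9 = (-3)³ · (4/3)`.
-/

open Polynomial WeierstrassCurve.Affine WeierstrassCurve.Affine.Point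

variable {K : Type*} [Field K]

lemma setOf_pow_eq_eq_nthRootsFinset {n : ℕ} (hn : 0 < n) (a : K) :
    {x : K | x ^ n = a} = nthRootsFinset n a := by
  ext x
  simp [mem_nthRootsFinset hn]

lemma IsPrimitiveRoot.ncard_setOf_pow_eq {n : ℕ} [NeZero n] {ζ : K} (hζ : IsPrimitiveRoot ζ n)
    {a α : K} (hα : α ^ n = a) (ha : a ≠ 0) : {x : K | x ^ n = a}.ncard = n := by
  classical
  rw [setOf_pow_eq_eq_nthRootsFinset (NeZero.pos n), Set.ncard_coe_finset, nthRootsFinset_def,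
    Multiset.toFinset_card_of_nodup (hζ.nthRoots_nodup ha), hζ.nthRoots_eq hα, Multiset.card_map,
    Multiset.card_range]

lemma finite_setOf_pow_eq {n : ℕ} (hn : 0 < n) (a : K) : {x : K | x ^ n = a}.Finite := by
  rw [setOf_pow_eq_eq_nthRootsFinset hn]
  exact Finset.finite_toSet _

lemma IsPrimitiveRoot.isSquare_neg_three {ζ : K} (hζ : IsPrimitiveRoot ζ 3) :
    IsSquare (-3 : K) := by
  have h := hζ.geom_sum_eq_zero (by norm_num)
  simp only [Finset.sum_range_succ, Finset.sum_range_zero] at h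
  exact ⟨2 * ζ + 1, by linear_combination -4 * h⟩

lemma isPrimitiveRoot_neg_one_two [NeZero (2 : K)] : IsPrimitiveRoot (-1 : K) 2 := by
  refine ⟨by norm_num, fun l hl => even_iff_two_dvd.mp ((neg_one_pow_eq_one_iff_even ?_).mp hl)⟩
  intro h
  exact two_ne_zero (by linear_combination -h : (2 : K) = 0)

lemma eq_neg_self_iff_of_two_ne_zero [NeZero (2 : K)] {a : K} : a = -a ↔ a = 0 := by
  rw [eq_neg_iff_add_eq_zero, ← two_mul, mul_eq_zero]
  simp [two_ne_zero]

lemma neg_four_mul_ne_zero [NeZero (2 : K)] {a : K} (ha : a ≠ 0) : -4 * a ≠ 0 := by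
  rw [show (-4 : K) = -(2 * 2) by norm_num]
  exact mul_ne_zero (neg_ne_zero.mpr (mul_ne_zero two_ne_zero two_ne_zero)) ha

def mordellCurve (b : K) : WeierstrassCurve.Affine K :=
  { a₁ := 0, a₂ := 0, a₃ := 0, a₄ := 0, a₆ := b }

section Mordell

variable {b x y : K}

lemma mordellCurve_equation_iff : (mordellCurve b).Equation x y ↔ y ^ 2 = x ^ 3 + b := by
  simp [equation_iff, mordellCurve]

lemma mordellCurve_negY : (mordellCurve b).negY x y = -y := by
  simp [negY, mordellCurve]

lemma setOf_mordellCurve_threeTorsion_eq :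
    {p : K × K | p.2 ^ 2 = p.1 ^ 3 + b ∧ p.1 * (p.1 ^ 3 + 4 * b) = 0} =
      Prod.mk 0 '' {y | y ^ 2 = b} ∪ {x | x ^ 3 = -4 * b} ×ˢ {y | y ^ 2 = -3 * b} := by
  ext ⟨x, y⟩
  simp only [Set.mem_ofPred_eq, Set.mem_union, Set.mem_image, Set.mem_prod, Prod.mk.injEq]
  constructor
  · rintro ⟨hE, hx⟩
    rcases mul_eq_zero.mp hx with rfl | hx
    · exact Or.inl ⟨y, by linear_combination hE, rfl, rfl⟩
    · exact Or.inr ⟨by linear_combination hx, by linear_combination hE + hx⟩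
  · rintro (⟨y, hy, rfl, rfl⟩ | ⟨hx, hy⟩)
    · exact ⟨by linear_combination hy, by ring⟩
    · exact ⟨by linear_combination hy - hx, by linear_combination x * hx⟩

variable [NeZero (2 : K)]

lemma mordellCurve_eq_negY_iff : y = (mordellCurve b).negY x y ↔ y = 0 := by
  rw [mordellCurve_negY, eq_neg_self_iff_of_two_ne_zero]

variable [NeZero (3 : K)]

lemma mordellCurve_nonsingular_iff :
    (mordellCurve b).Nonsingular x y ↔ y ^ 2 = x ^ 3 + b ∧ (x ≠ 0 ∨ y ≠ 0) := by
  rw [nonsingular_iff, mordellCurve_equation_iff]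
  simp [mordellCurve, eq_neg_self_iff_of_two_ne_zero, three_ne_zero]

lemma mordellCurve_nonsingular (hb : b ≠ 0) (h : y ^ 2 = x ^ 3 + b) :
    (mordellCurve b).Nonsingular x y := by
  refine mordellCurve_nonsingular_iff.mpr ⟨h, ?_⟩
  by_contra! hxy
  obtain ⟨rfl, rfl⟩ := hxy
  exact hb (by linear_combination -h)

variable [DecidableEq K]

lemma mordellCurve_addX_slope_self_eq_iff (hE : y ^ 2 = x ^ 3 + b) (hy : y ≠ 0) :
    (mordellCurve b).addX x x ((mordellCurve b).slope x x y y) = x ↔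
      x * (x ^ 3 + 4 * b) = 0 := by
  have hy' : y ≠ (mordellCurve b).negY x y := mt mordellCurve_eq_negY_iff.mp hy
  set L := (mordellCurve b).slope x x y y with hL
  have hL' : L * (2 * y) = 3 * x ^ 2 := by
    rw [hL, slope_of_Y_ne rfl hy', mordellCurve_negY, sub_neg_eq_add, ← two_mul,
      div_mul_cancel₀ _ (mul_ne_zero two_ne_zero hy)]
    simp [mordellCurve]
  have haddX : (mordellCurve b).addX x x L = L ^ 2 - 2 * x := by
    simp [addX, mordellCurve]
    ring
  have hfac : (L ^ 2 - 3 * x) * (2 * y) ^ 2 = -3 * (x * (x ^ 3 + 4 * b)) := by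
    linear_combination (L * 2 * y + 3 * x ^ 2) * hL' - 12 * x * hE
  have h2y : (2 * y) ^ 2 ≠ 0 := pow_ne_zero 2 (mul_ne_zero two_ne_zero hy)
  rw [haddX, ← sub_eq_zero, show L ^ 2 - 2 * x - x = L ^ 2 - 3 * x by ring,
    ← mul_eq_zero_iff_right h2y, hfac, mul_eq_zero_iff_left (by simp [three_ne_zero])]

lemma mordellCurve_three_smul_eq_zero_iff (h : (mordellCurve b).Nonsingular x y) :
    3 • some x y h = 0 ↔ x * (x ^ 3 + 4 * b) = 0 := by
  obtain ⟨hE, hxy⟩ := mordellCurve_nonsingular_iff.mp h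
  rw [succ_nsmul, two_nsmul, add_eq_zero_iff_eq_neg]
  by_cases hy : y = 0
  · subst hy
    have hx : x ≠ 0 := by simpa using hxy
    rw [add_self_of_Y_eq (mordellCurve_eq_negY_iff.mpr rfl), neg_some]
    refine iff_of_false (some_ne_zero _).symm fun h3 => hx ?_
    have hx4 : -3 * x ^ 4 = 0 := by linear_combination h3 + 4 * x * hE
    simpa [three_ne_zero] using hx4
  · rw [add_self_of_Y_ne' (mt mordellCurve_eq_negY_iff.mp hy), neg_inj, some.injEq, negAddY,
      and_iff_left_of_imp fun hX => by rw [hX, sub_self, mul_zero, zero_add]]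
    exact mordellCurve_addX_slope_self_eq_iff hE hy

lemma mordellCurve_natCard_threeTorsion_eq_ncard (hb : b ≠ 0) :
    Nat.card {P : (mordellCurve b).Point // 3 • P = 0} =
      {p : K × K | p.2 ^ 2 = p.1 ^ 3 + b ∧ p.1 * (p.1 ^ 3 + 4 * b) = 0}.ncard + 1 := by
  set S := {p : K × K | p.2 ^ 2 = p.1 ^ 3 + b ∧ p.1 * (p.1 ^ 3 + 4 * b) = 0} with hS
  have hmem (p : K × K) : (∃ h : (mordellCurve b).Nonsingular p.1 p.2, 3 • some _ _ h = 0) ↔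
      p ∈ S :=
    ⟨fun ⟨h, h3⟩ => ⟨(mordellCurve_nonsingular_iff.mp h).1,
        (mordellCurve_three_smul_eq_zero_iff h).mp h3⟩,
      fun ⟨hE, h3⟩ => ⟨mordellCurve_nonsingular hb hE,
        (mordellCurve_three_smul_eq_zero_iff _).mpr h3⟩⟩
  have : Finite S := by
    rw [hS, setOf_mordellCurve_threeTorsion_eq]
    exact (((finite_setOf_pow_eq two_pos b).image _).union
      ((finite_setOf_pow_eq three_pos _).prod (finite_setOf_pow_eq two_pos _))).to_subtype
  rw [Nat.card_congr (nonsingularPointEquivSubtype (p := fun P => 3 • P = 0) (smul_zero 3)),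
    WithZero, Nat.card_congr (Equiv.subtypeEquivRight hmem).optionCongr, Finite.card_option,
    Nat.card_coe_set_eq]

lemma mordellCurve_natCard_threeTorsion (hb : IsSquare b) (h3 : IsSquare (-3 : K))
    (hb0 : b ≠ 0) :
    Nat.card {P : (mordellCurve b).Point // 3 • P = 0} =
      3 + 2 * {x : K | x ^ 3 = -4 * b}.ncard := by
  have hsq {a : K} (ha : IsSquare a) (ha0 : a ≠ 0) : {y : K | y ^ 2 = a}.ncard = 2 := by
    obtain ⟨r, rfl⟩ := ha
    exact isPrimitiveRoot_neg_one_two.ncard_setOf_pow_eq (sq r) ha0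
  have hdisj : Disjoint (Prod.mk 0 '' {y : K | y ^ 2 = b})
      ({x | x ^ 3 = -4 * b} ×ˢ {y | y ^ 2 = -3 * b}) := by
    rw [Set.disjoint_left]
    rintro _ ⟨y, -, rfl⟩ ⟨hx, -⟩
    exact neg_four_mul_ne_zero hb0 (by simpa using hx.symm)
  rw [mordellCurve_natCard_threeTorsion_eq_ncard hb0, setOf_mordellCurve_threeTorsion_eq,
    Set.ncard_union_eq hdisj ((finite_setOf_pow_eq two_pos _).image _)
      ((finite_setOf_pow_eq three_pos _).prod (finite_setOf_pow_eq two_pos _)),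
    Set.ncard_image_of_injective _ (Prod.mk_right_injective 0), Set.ncard_prod, hsq hb hb0,
    hsq (h3.mul hb) (by simp [hb0, three_ne_zero])]
  ring

lemma mordellCurve_natCard_threeTorsion_eq_nine_iff {ζ : K} (hζ : IsPrimitiveRoot ζ 3)
    (hb : IsSquare b) (hb0 : b ≠ 0) :
    Nat.card {P : (mordellCurve b).Point // 3 • P = 0} = 9 ↔ ∃ c : K, c ^ 3 = -4 * b := by
  rw [mordellCurve_natCard_threeTorsion hb hζ.isSquare_neg_three hb0]
  constructor
  · intro h9
    by_contra! hc
    rw [(Set.ncard_eq_zero (finite_setOf_pow_eq three_pos _)).mpr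
      (Set.eq_empty_iff_forall_notMem.mpr hc)] at h9
    norm_num at h9
  · rintro ⟨c, hc⟩
    rw [hζ.ncard_setOf_pow_eq hc (neg_four_mul_ne_zero hb0)]

end Mordell

open Classical in
theorem stmt_16_general
    (F : Type) [Field F] [Algebra ℚ F]
    (ζ : F) (hζ : IsPrimitiveRoot ζ 3)
    (N : Type) [Field N] [Algebra F N] :
    -- (i) Pic⁰(E_N)[3] has order 9 iff F(12^{1/3}) ⊆ N
    (Nat.card {P : WeierstrassCurve.Affine.Point
        ({ a₁ := 0, a₂ := 0, a₃ := 0, a₄ := 0, a₆ := -3 } : WeierstrassCurve.Affine N) //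
          3 • P = 0} = 9
      ↔ ∃ u : N, u ^ 3 = 12)
      ∧
    -- (ii) Pic⁰(E'_N)[3] has order 9 iff F((4/3)^{1/3}) ⊆ N
    (Nat.card {P : WeierstrassCurve.Affine.Point
        ({ a₁ := 0, a₂ := 0, a₃ := 0, a₄ := 0, a₆ := 9 } : WeierstrassCurve.Affine N) //
          3 • P = 0} = 9
      ↔ ∃ u : N, u ^ 3 = 4 / 3) := by
  have : CharZero F := charZero_of_injective_algebraMap (algebraMap ℚ F).injective
  have : CharZero N := charZero_of_injective_algebraMap (algebraMap F N).injective
  have hζN : IsPrimitiveRoot (algebraMap F N ζ) 3 :=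
    hζ.map_of_injective (algebraMap F N).injective
  constructor
  · refine (mordellCurve_natCard_threeTorsion_eq_nine_iff hζN hζN.isSquare_neg_three
      (by norm_num)).trans ?_
    norm_num
  · refine (mordellCurve_natCard_threeTorsion_eq_nine_iff hζN ⟨3, by norm_num⟩
      (by norm_num)).trans ?_
    constructor
    · rintro ⟨c, hc⟩
      exact ⟨c / -3, by rw [div_pow, hc]; norm_num⟩
    · rintro ⟨u, hu⟩
      exact ⟨-3 * u, by linear_combination -27 * hu⟩

open Classical in
theorem stmt_16
    (F : Type) [Field F] [Algebra ℚ F] [IsCyclotomicExtension {3} ℚ F]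
    (ζ : F) (hζ : IsPrimitiveRoot ζ 3)
    (N : Type) [Field N] [Algebra F N] [FiniteDimensional F N] :
    -- (i) Pic⁰(E_N)[3] has order 9 iff F(12^{1/3}) ⊆ N
    (Nat.card {P : WeierstrassCurve.Affine.Point
        ({ a₁ := 0, a₂ := 0, a₃ := 0, a₄ := 0, a₆ := -3 } : WeierstrassCurve.Affine N) //
          3 • P = 0} = 9
      ↔ ∃ u : N, u ^ 3 = 12)
      ∧
    -- (ii) Pic⁰(E'_N)[3] has order 9 iff F((4/3)^{1/3}) ⊆ N
    (Nat.card {P : WeierstrassCurve.Affine.Point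
        ({ a₁ := 0, a₂ := 0, a₃ := 0, a₄ := 0, a₆ := 9 } : WeierstrassCurve.Affine N) //
          3 • P = 0} = 9
      ↔ ∃ u : N, u ^ 3 = 4 / 3) :=
  stmt_16_general F ζ hζ N
end
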